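/- arXiv:1812.03498 — 4 statements merged into one kernel-verified Lean document; each statement's English description precedes it below -/
import Mathlib

section
/- Let R be a ring, n a nonnegative integer, and G, M R-modules. If Ext^i_R(G,M) = 0 for all i ≥ n+1, then Ext^i_R(W,M) = 0 for all i ≥ n+1 and every module W in ^⊥(G^{⊥∞}). -/
open CategoryTheory Opposite

noncomputable section

/-- The Ext group `Ext^n_R(M, N)` (as a `ℤ`-module). -/
def extMod (R : Type) [Ring R] (n : ℕ) (M N : ModuleCat.{0} R) : ModuleCat ℤ :=
  ((Ext ℤ (ModuleCat.{0} R) n).obj (op M)).obj N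

variable (R : Type) [Ring R]

/-- `Ext^n_R(M,N) = 0`. -/
def extVanish (n : ℕ) (M N : ModuleCat.{0} R) : Prop :=
  Subsingleton (extMod R n M N)

/-- `M^{⊥∞} = {X | Ext^i(M,X) = 0 for all i ≥ 1}`. -/
def perpInf (M : ModuleCat.{0} R) : Set (ModuleCat.{0} R) :=
  {X | ∀ i : ℕ, 1 ≤ i → extVanish R i M X}

/-- `^⊥𝒞 = {W | Ext^1(W,C) = 0 for all C ∈ 𝒞}`. -/
def leftPerp (𝒞 : Set (ModuleCat.{0} R)) : Set (ModuleCat.{0} R) :=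
  {W | ∀ C ∈ 𝒞, extVanish R 1 W C}

/-- `𝒞^⊥ = {X | Ext^1(C,X) = 0 for all C ∈ 𝒞}`. -/
def rightPerp (𝒞 : Set (ModuleCat.{0} R)) : Set (ModuleCat.{0} R) :=
  {X | ∀ C ∈ 𝒞, extVanish R 1 C X}

/-- Projective dimension at most `n`, via vanishing of `Ext^i` for `i ≥ n+1`. -/
def pdLE (n : ℕ) (M : ModuleCat.{0} R) : Prop :=
  ∀ (X : ModuleCat.{0} R) (i : ℕ), n + 1 ≤ i → extVanish R i M X

/-- `S` is a (first) syzygy of `M`: there is an exact sequence `0 → S → P → M → 0`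
with `P` projective. -/
def IsSyzygy (S M : ModuleCat.{0} R) : Prop :=
  ∃ (P : ModuleCat.{0} R) (_ : Projective P) (f : P ⟶ M) (ι : S ⟶ P),
    Function.Surjective f ∧ Function.Injective ι ∧ Function.Exact ι f

/-- `S` is an `n`-th syzygy of `M`. -/
def IsNthSyzygy : ℕ → ModuleCat.{0} R → ModuleCat.{0} R → Prop
  | 0, S, M => Nonempty (S ≅ M)
  | n + 1, S, M => ∃ S' : ModuleCat.{0} R, IsSyzygy R S' M ∧ IsNthSyzygy n S S'

/-- `G` is Gorenstein projective: a kernel in a totally acyclic complex of projectives. -/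
def IsGorensteinProjective (G : ModuleCat.{0} R) : Prop :=
  ∃ (P : ℤ → ModuleCat.{0} R) (d : ∀ i : ℤ, P i ⟶ P (i + 1)),
    (∀ i, Projective (P i)) ∧
    (∀ i, Function.Exact (d i) (d (i + 1))) ∧
    (∀ (Q : ModuleCat.{0} R), Projective Q → ∀ i : ℤ,
      Function.Exact (fun φ : P (i + 1 + 1) ⟶ Q => d (i + 1) ≫ φ)
        (fun φ : P (i + 1) ⟶ Q => d i ≫ φ)) ∧
    ∃ ι : G ⟶ P 0, Function.Injective ι ∧ Function.Exact ι (d 0)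

/-- Gorenstein projective dimension at most `n`: some `n`-th syzygy is Gorenstein
projective. -/
def gpdLE (n : ℕ) (M : ModuleCat.{0} R) : Prop :=
  ∃ S : ModuleCat.{0} R, IsNthSyzygy R n S M ∧ IsGorensteinProjective R S

/-- `N` is strongly Gorenstein projective. -/
def IsStronglyGorensteinProjective (N : ModuleCat.{0} R) : Prop :=
  ∃ (P : ModuleCat.{0} R) (_ : Projective P) (f : P ⟶ P),
    Function.Exact f f ∧
    (∀ (Q : ModuleCat.{0} R), Projective Q →
      Function.Exact (fun φ : P ⟶ Q => f ≫ φ) (fun φ : P ⟶ Q => f ≫ φ)) ∧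
    ∃ ι : N ⟶ P, Function.Injective ι ∧ Function.Exact ι f

/-- `S` is a direct summand of `N`. -/
def IsDirectSummand (S N : ModuleCat.{0} R) : Prop :=
  ∃ Y : ModuleCat.{0} R, Nonempty (ModuleCat.of R (↥S × ↥Y) ≅ N)

/-- `Add T`: direct summands of direct sums of copies of `T`. -/
def AddClass (T : ModuleCat.{0} R) : Set (ModuleCat.{0} R) :=
  {X | ∃ (ι : Type) (Y : ModuleCat.{0} R),
    Nonempty (ModuleCat.of R (↥X × ↥Y) ≅ ModuleCat.of R (ι →₀ ↥T))}

/-- `(𝒜, ℬ)` is a cotorsion pair. -/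
def IsCotorsionPair (𝒜 ℬ : Set (ModuleCat.{0} R)) : Prop :=
  𝒜 = leftPerp R ℬ ∧ ℬ = rightPerp R 𝒜

/-- A hereditary pair: `Ext^i(A,B) = 0` for all `i ≥ 1`, `A ∈ 𝒜`, `B ∈ ℬ`. -/
def IsHereditaryPair (𝒜 ℬ : Set (ModuleCat.{0} R)) : Prop :=
  ∀ i : ℕ, 1 ≤ i → ∀ A ∈ 𝒜, ∀ B ∈ ℬ, extVanish R i A B

/-- A complete pair: every module has special approximations. -/
def IsCompletePair (𝒜 ℬ : Set (ModuleCat.{0} R)) : Prop :=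
  ∀ M : ModuleCat.{0} R,
    (∃ (B : ModuleCat.{0} R) (_ : B ∈ ℬ) (L : ModuleCat.{0} R) (_ : L ∈ 𝒜)
      (f : M ⟶ B) (g : B ⟶ L),
      Function.Injective f ∧ Function.Surjective g ∧ Function.Exact f g) ∧
    (∃ (D : ModuleCat.{0} R) (_ : D ∈ ℬ) (C : ModuleCat.{0} R) (_ : C ∈ 𝒜)
      (f : D ⟶ C) (g : C ⟶ M),
      Function.Injective f ∧ Function.Surjective g ∧ Function.Exact f g)

/-- `T` is an `n`-tilting module. -/
def IsNTilting (n : ℕ) (T : ModuleCat.{0} R) : Prop :=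
  pdLE R n T ∧
  (∀ (ι : Type) (i : ℕ), 1 ≤ i → extVanish R i T (ModuleCat.of R (ι →₀ ↥T))) ∧
  ∃ (C : ℕ → ModuleCat.{0} R) (D : ∀ i : ℕ, C i ⟶ C (i + 1)),
    (∀ i, Function.Exact (D i) (D (i + 1))) ∧
    Subsingleton (C 0) ∧
    Nonempty (C 1 ≅ ModuleCat.of R R) ∧
    (∀ i : ℕ, 2 ≤ i → i ≤ n + 2 → C i ∈ AddClass R T) ∧
    (∀ i : ℕ, n + 3 ≤ i → Subsingleton (C i))

/-- `T` is a tilting module. -/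
def IsTilting (T : ModuleCat.{0} R) : Prop :=
  ∃ n : ℕ, IsNTilting R n T

end

/-!
Dimension shifting along `0 → M → E → K → 0` with `E` injective gives
`Ext^{i+1}(Y, M) = 0 ↔ Ext^i(Y, K) = 0` for `i ≥ 1`. Hence `G^{⊥∞}` is closed under cosyzygies,
so a module `W ∈ ^⊥(G^{⊥∞})` has `Ext^i(W, -) = 0` on `G^{⊥∞}` for every `i ≥ 1`. If
`Ext^{≥ n+1}(G, M) = 0`, the `n`-th cosyzygy `K` of `M` lies in `G^{⊥∞}`, and then
`Ext^{n+i}(W, M) = 0 ↔ Ext^i(W, K) = 0` holds for all `i ≥ 1`.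

The `Ext` in `extVanish` is the left derived functor `CategoryTheory.Ext`, for which Mathlib has no
long exact sequence in the second variable; the needed part of it is read off from a projective
resolution of the first variable.
-/

open Limits

section DimensionShifting

variable {R : Type} [Ring R]

lemma extVanish_iff_isZero_homology {Y : ModuleCat.{0} R} (P : ProjectiveResolution Y) (n : ℕ)
    (N : ModuleCat.{0} R) :
    extVanish R n Y N ↔ IsZero ((P.complex.linearYonedaObj ℤ N).homology n) :=
  ModuleCat.isZero_iff_subsingleton.symm.trans (P.isoExt n N).isZero_iff

lemma CategoryTheory.ShortComplex.ShortExact.map_linearCoyoneda_of_projective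
    {S : ShortComplex (ModuleCat.{0} R)} (hS : S.ShortExact) (P : ModuleCat.{0} R) [Projective P] :
    (S.map ((linearCoyoneda ℤ (ModuleCat.{0} R)).obj (Opposite.op P))).ShortExact := by
  have := hS.mono_f
  have := hS.epi_g
  refine { exact := ?_, mono_f := ?_, epi_g := ?_ }
  · rw [ShortComplex.moduleCat_exact_iff]
    exact fun φ hφ => ⟨hS.exact.lift φ hφ, hS.exact.lift_f φ hφ⟩
  · rw [ModuleCat.mono_iff_injective]
    exact fun φ ψ h => (cancel_mono S.f).1 h
  · rw [ModuleCat.epi_iff_surjective]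
    exact fun ψ => ⟨Projective.factorThru ψ S.g, Projective.factorThru_comp ψ S.g⟩

def ChainComplex.linearYonedaObjMap (Z : ChainComplex (ModuleCat.{0} R) ℕ)
    {A B : ModuleCat.{0} R} (f : A ⟶ B) : Z.linearYonedaObj ℤ A ⟶ Z.linearYonedaObj ℤ B where
  f i := ((linearCoyoneda ℤ (ModuleCat.{0} R)).obj (op (Z.X i))).map f
  comm' i j _ := by
    ext φ
    exact Category.assoc (Z.d j i) (φ : Z.X i ⟶ A) f

def ChainComplex.linearYonedaShortComplex (Z : ChainComplex (ModuleCat.{0} R) ℕ)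
    (S : ShortComplex (ModuleCat.{0} R)) : ShortComplex (CochainComplex (ModuleCat.{0} ℤ) ℕ) :=
  ShortComplex.mk (Z.linearYonedaObjMap S.f) (Z.linearYonedaObjMap S.g) (by
    ext j φ
    exact (Category.assoc (φ : Z.X j ⟶ S.X₁) S.f S.g).trans
      ((congrArg _ S.zero).trans comp_zero))

lemma CategoryTheory.ShortComplex.ShortExact.linearYonedaShortComplex
    {S : ShortComplex (ModuleCat.{0} R)} (hS : S.ShortExact) (Z : ChainComplex (ModuleCat.{0} R) ℕ)
    [∀ j, Projective (Z.X j)] :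
    (Z.linearYonedaShortComplex S).ShortExact :=
  HomologicalComplex.shortExact_of_degreewise_shortExact _
    fun j => hS.map_linearCoyoneda_of_projective (Z.X j)

lemma extVanish_of_injective (Y : ModuleCat.{0} R) {E : ModuleCat.{0} R} [Injective E] {i : ℕ}
    (hi : 1 ≤ i) : extVanish R i Y E := by
  obtain ⟨m, rfl⟩ : ∃ m, i = m + 1 := ⟨i - 1, by omega⟩
  let P := ProjectiveResolution.of Y
  rw [extVanish_iff_isZero_homology P, ← HomologicalComplex.exactAt_iff_isZero_homology,
    HomologicalComplex.exactAt_iff' _ m (m + 1) (m + 2) (by simp) (by simp),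
    ShortComplex.moduleCat_exact_iff]
  intro φ hφ
  let T := P.complex.sc' (m + 2) (m + 1) m
  have hT : T.Exact := by
    have := P.complex_exactAt_succ m
    rwa [HomologicalComplex.exactAt_iff' _ (m + 2) (m + 1) m (by simp) (by simp)] at this
  -- `φ` kills the image of `d`, so it factors through the opcycles, which embed into `P_m`.
  have : Mono T.fromOpcycles := hT.mono_fromOpcycles
  have hφ' : T.f ≫ φ = 0 := hφ
  let ψ : T.X₃ ⟶ E := Injective.factorThru (T.descOpcycles φ hφ') T.fromOpcycles
  refine ⟨ψ, ?_⟩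
  change T.g ≫ ψ = φ
  rw [← T.p_fromOpcycles, Category.assoc, Injective.comp_factorThru]
  exact T.p_descOpcycles φ hφ'

lemma extVanish_succ_iff_of_injective {S : ShortComplex (ModuleCat.{0} R)} (hS : S.ShortExact)
    [Injective S.X₂] (Y : ModuleCat.{0} R) {i : ℕ} (hi : 1 ≤ i) :
    extVanish R (i + 1) Y S.X₁ ↔ extVanish R i Y S.X₃ := by
  let P := ProjectiveResolution.of Y
  have hT := hS.linearYonedaShortComplex P.complex
  have hX₂ : ∀ j, 1 ≤ j → IsZero ((P.complex.linearYonedaObj ℤ S.X₂).homology j) :=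
    fun j hj => (extVanish_iff_isZero_homology P j S.X₂).1 (extVanish_of_injective Y hj)
  simp only [extVanish_iff_isZero_homology P]
  constructor
  · exact fun h₁ => (hT.homology_exact₃ i (i + 1) rfl).isZero_X₂
      ((hX₂ i hi).eq_of_src _ _) (h₁.eq_of_tgt _ _)
  · exact fun h₃ => (hT.homology_exact₁ i (i + 1) rfl).isZero_X₂
      (h₃.eq_of_src _ _) ((hX₂ (i + 1) (by omega)).eq_of_tgt _ _)

noncomputable def cosyzygyShortComplex (M : ModuleCat.{0} R) : ShortComplex (ModuleCat.{0} R) :=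
  ShortComplex.mk (Injective.ι M) (cokernel.π _) (cokernel.condition _)

lemma shortExact_cosyzygyShortComplex (M : ModuleCat.{0} R) :
    (cosyzygyShortComplex M).ShortExact where
  exact := ShortComplex.exact_of_g_is_cokernel _ (cokernelIsCokernel _)
  mono_f := by dsimp [cosyzygyShortComplex]; infer_instance
  epi_g := by dsimp [cosyzygyShortComplex]; infer_instance

instance (M : ModuleCat.{0} R) : Injective (cosyzygyShortComplex M).X₂ := by
  dsimp [cosyzygyShortComplex]; infer_instance

lemma extVanish_cosyzygy_of_extVanish {G M : ModuleCat.{0} R} {n : ℕ}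
    (h : ∀ i, n + 2 ≤ i → extVanish R i G M) :
    ∀ i, n + 1 ≤ i → extVanish R i G (cosyzygyShortComplex M).X₃ := fun i hi =>
  (extVanish_succ_iff_of_injective (shortExact_cosyzygyShortComplex M) G (by omega)).1
    (h (i + 1) (by omega))

lemma cosyzygy_mem_perpInf {G M : ModuleCat.{0} R} (hM : M ∈ perpInf R G) :
    (cosyzygyShortComplex M).X₃ ∈ perpInf R G :=
  extVanish_cosyzygy_of_extVanish (n := 0) fun i hi => hM i (by omega)

lemma extVanish_of_mem_leftPerp_perpInf {G W : ModuleCat.{0} R}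
    (hW : W ∈ leftPerp R (perpInf R G)) {i : ℕ} (hi : 1 ≤ i) {N : ModuleCat.{0} R}
    (hN : N ∈ perpInf R G) : extVanish R i W N := by
  induction i, hi using Nat.le_induction generalizing N with
  | base => exact hW N hN
  | succ i hi ih =>
    exact (extVanish_succ_iff_of_injective (shortExact_cosyzygyShortComplex N) W hi).2
      (ih (cosyzygy_mem_perpInf hN))

end DimensionShifting

theorem stmt1 (R : Type) [Ring R] (n : ℕ) (G M : ModuleCat.{0} R)
    (h : ∀ i : ℕ, n + 1 ≤ i → extVanish R i G M) :
    ∀ W ∈ leftPerp R (perpInf R G), ∀ i : ℕ, n + 1 ≤ i → extVanish R i W M := by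
  intro W hW
  induction n generalizing M with
  | zero => exact fun i hi => extVanish_of_mem_leftPerp_perpInf hW hi h
  | succ n ih =>
    intro i hi
    obtain ⟨j, rfl⟩ : ∃ j, i = j + 1 := ⟨i - 1, by omega⟩
    exact (extVanish_succ_iff_of_injective (shortExact_cosyzygyShortComplex M) W
      (by omega)).2 (ih _ (extVanish_cosyzygy_of_extVanish h) j (by omega))
end

section
/- Let R be a ring. If ⋯ → P^{-1} → P^0 → P^1 → ⋯ is an exact sequence of projective R-modules with differentials f^i such that every kernel ker(f^i) is Gorenstein projective, then the direct sum ⊕_i ker(f^i) is a strongly Gorenstein projective R-module. -/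
open CategoryTheory Opposite

/-!
Fold the complex into the projective module `S = ⨁ᵢ Pᵢ` with the degree-one shift `f` of the
differentials. For `N = ⨁ᵢ ker dᵢ`, exactness of the complex gives a short exact sequence
`0 → N → S → N → 0` whose composite `S ↠ N ↪ S` is `f`, so `⋯ → S → S → ⋯` (all maps `f`) is exact
with kernel `N`. It stays exact under `Hom(-, Q)` for projective `Q` because `Ext¹(N, Q)`, the
product of the `Ext¹(ker dᵢ, Q)`, vanishes. We use this vanishing in its elementary form: maps
from a syzygy of a Gorenstein projective module to `Q` extend to the ambient projective module.
This holds for the syzygy read off a totally acyclic complex, and comparing projective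
presentations transfers it to every other one.
-/

section Extension

variable {R : Type*} [Ring R] {M N P G Q : Type*} [AddCommGroup M] [Module R M]
  [AddCommGroup N] [Module R N] [AddCommGroup P] [Module R P] [AddCommGroup G] [Module R G]
  [AddCommGroup Q] [Module R Q]

theorem Function.Exact.exists_comp_eq_of_comp_eq_zero {f : M →ₗ[R] N} {g : N →ₗ[R] P}
    (hfg : Function.Exact f g) (hg : Function.Surjective g) {φ : N →ₗ[R] Q}
    (hφ : φ ∘ₗ f = 0) : ∃ φ' : P →ₗ[R] Q, φ' ∘ₗ g = φ := by
  refine ⟨(LinearMap.range f).liftQ φ ?_ ∘ₗ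
    (hfg.linearEquivOfSurjective hg).symm.toLinearMap, ?_⟩
  · rintro _ ⟨x, rfl⟩
    exact LinearMap.congr_fun hφ x
  · ext x
    simp

theorem exists_comp_subtype_eq_of_presentation {B₀ B : Type*} [AddCommGroup B₀] [Module R B₀]
    [Module.Projective R B₀] [AddCommGroup B] [Module R B] [Module.Projective R B]
    {K₀ : Submodule R B₀} {K : Submodule R B} {p₀ : B₀ →ₗ[R] G} {p : B →ₗ[R] G}
    (hp₀ : Function.Surjective p₀) (hp : Function.Surjective p)
    (hK₀ : Function.Exact K₀.subtype p₀) (hK : Function.Exact K.subtype p)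
    (h₀ : ∀ φ : K₀ →ₗ[R] Q, ∃ ψ : B₀ →ₗ[R] Q, ψ ∘ₗ K₀.subtype = φ)
    (φ : K →ₗ[R] Q) : ∃ ψ : B →ₗ[R] Q, ψ ∘ₗ K.subtype = φ := by
  obtain ⟨α, hα⟩ := Module.projective_lifting_property p p₀ hp
  obtain ⟨β, hβ⟩ := Module.projective_lifting_property p₀ p hp₀
  have mem_K {x : B} (hx : p x = 0) : x ∈ K := by
    simpa using (hK x).1 hx
  have mem_K₀ {x : B₀} (hx : p₀ x = 0) : x ∈ K₀ := by
    simpa using (hK₀ x).1 hx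
  have hKp (x : K) : p x = 0 := hK.apply_apply_eq_zero x
  have hK₀p (x : K₀) : p₀ x = 0 := hK₀.apply_apply_eq_zero x
  let α' : K₀ →ₗ[R] K := α.restrict fun x hx ↦ mem_K <| by
    rw [← LinearMap.comp_apply, hα, hK₀p ⟨x, hx⟩]
  let β' : K →ₗ[R] K₀ := β.restrict fun x hx ↦ mem_K₀ <| by
    rw [← LinearMap.comp_apply, hβ, hKp ⟨x, hx⟩]
  let e : B →ₗ[R] K := (LinearMap.id - α ∘ₗ β).codRestrict K fun x ↦ mem_K <| by
    simp [← LinearMap.comp_apply (f := p), hα, ← LinearMap.comp_apply (f := p₀), hβ]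
  obtain ⟨χ, hχ⟩ := h₀ (φ ∘ₗ α')
  refine ⟨χ ∘ₗ β + φ ∘ₗ e, LinearMap.ext fun x ↦ ?_⟩
  have hχx : χ (β x) = φ (α' (β' x)) := LinearMap.congr_fun hχ (β' x)
  have hex : e x = x - α' (β' x) := Subtype.ext rfl
  simp [hχx, hex]

end Extension

section Gorenstein

variable {R : Type} [Ring R]

theorem IsGorensteinProjective.exists_presentation {G : ModuleCat.{0} R}
    (hG : IsGorensteinProjective R G) {Q : ModuleCat.{0} R} (hQ : Projective Q) :
    ∃ (B₀ : ModuleCat.{0} R) (p₀ : B₀ →ₗ[R] G), Module.Projective R B₀ ∧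
      Function.Surjective p₀ ∧
      ∀ φ : LinearMap.ker p₀ →ₗ[R] Q,
        ∃ ψ : B₀ →ₗ[R] Q, ψ ∘ₗ (LinearMap.ker p₀).subtype = φ := by
  obtain ⟨C, d, hC, hd, hdQ, ι, hι, hιd⟩ := hG
  have hd₁ : Function.Exact (d (-1)).hom (d 0).hom := hd (-1)
  have hd₂ : Function.Exact (d (-2)).hom (d (-1)).hom := hd (-2)
  -- `G ≅ ker d₀ = im d₋₁`, so `d₋₁` induces `p₀ : C₋₁ ↠ G`, with kernel `im d₋₂`
  let p₀ : C (-1) →ₗ[R] G := (LinearEquiv.ofInjective ι.hom hι).symm ∘ₗ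
    (d (-1)).hom.codRestrict (LinearMap.range ι.hom) fun x ↦
      (hιd _).1 (hd₁.apply_apply_eq_zero x)
  have hιp₀ (x : C (-1)) : ι (p₀ x) = d (-1) x :=
    LinearEquiv.ofInjective_symm_apply (h := hι) ι.hom _
  have hp₀ (x : C (-1)) : p₀ x = 0 ↔ d (-1) x = 0 := by
    rw [← hιp₀, ← map_zero ι.hom, hι.eq_iff]
  refine ⟨C (-1), p₀, inferInstance, fun g ↦ ?_, fun φ ↦ ?_⟩
  · obtain ⟨x, hx⟩ := hd₁ (ι g) |>.1 ((hιd _).2 ⟨g, rfl⟩)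
    exact ⟨x, hι (by rw [hιp₀, hx])⟩
  · let c : C (-2) →ₗ[R] LinearMap.ker p₀ := (d (-2)).hom.codRestrict _ fun y ↦
      (hp₀ _).2 (hd₂.apply_apply_eq_zero y)
    have hc : Function.Surjective c := fun ⟨x, hx⟩ ↦ by
      obtain ⟨y, rfl⟩ := hd₂ x |>.1 ((hp₀ x).1 hx)
      exact ⟨y, rfl⟩
    have hφc : d (-3) ≫ ModuleCat.ofHom (φ ∘ₗ c : C (-3 + 1) →ₗ[R] Q) = 0 := by
      ext y
      have hcy : c (d (-3) y) = 0 := Subtype.ext ((hd (-3)).apply_apply_eq_zero y)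
      simp [hcy]
    obtain ⟨Ψ, hΨ⟩ := (hdQ Q hQ (-3) _).1 hφc
    refine ⟨Ψ.hom, (LinearMap.cancel_right hc).1 (LinearMap.ext fun y ↦ ?_)⟩
    exact congr($(hΨ).hom y)

theorem IsGorensteinProjective.exists_comp_subtype_eq {G : ModuleCat.{0} R}
    (hG : IsGorensteinProjective R G) {Q : ModuleCat.{0} R} (hQ : Projective Q)
    {B : Type*} [AddCommGroup B] [Module R B] [Module.Projective R B] {K : Submodule R B}
    {p : B →ₗ[R] G} (hp : Function.Surjective p) (hK : Function.Exact K.subtype p)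
    (φ : K →ₗ[R] Q) : ∃ ψ : B →ₗ[R] Q, ψ ∘ₗ K.subtype = φ := by
  obtain ⟨B₀, p₀, _, hp₀, h₀⟩ := hG.exists_presentation hQ
  exact exists_comp_subtype_eq_of_presentation hp₀ hp (LinearMap.exact_subtype_ker_map p₀) hK
    h₀ φ

end Gorenstein

namespace DFinsupp

variable {R : Type*} [Ring R] {Q : Type*} [AddCommGroup Q] [Module R Q]

section mapRange

variable {ι : Type*} [DecidableEq ι] {K M : ι → Type*} [∀ i, AddCommGroup (K i)]
  [∀ i, Module R (K i)] [∀ i, AddCommGroup (M i)] [∀ i, Module R (M i)]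

theorem exists_comp_mapRange_eq {g : ∀ i, K i →ₗ[R] M i}
    (hg : ∀ i (φ : K i →ₗ[R] Q), ∃ ψ : M i →ₗ[R] Q, ψ ∘ₗ g i = φ)
    (φ : (Π₀ i, K i) →ₗ[R] Q) :
    ∃ ψ : (Π₀ i, M i) →ₗ[R] Q, ψ ∘ₗ mapRange.linearMap g = φ := by
  choose ψ hψ using fun i ↦ hg i (φ ∘ₗ lsingle i)
  refine ⟨lsum ℕ ψ, lhom_ext fun i k ↦ ?_⟩
  simpa using LinearMap.congr_fun (hψ i) k

end mapRange

section shift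

variable {M N : ℤ → Type*} [∀ i, AddCommGroup (M i)] [∀ i, Module R (M i)]
  [∀ i, AddCommGroup (N i)] [∀ i, Module R (N i)]

def shiftSum (d : ∀ i, M i →ₗ[R] N (i + 1)) : (Π₀ i, M i) →ₗ[R] Π₀ i, N i :=
  lsum ℕ fun i ↦ lsingle (i + 1) ∘ₗ d i

variable (d : ∀ i, M i →ₗ[R] N (i + 1))

@[simp]
theorem shiftSum_single (i : ℤ) (x : M i) : shiftSum d (single i x) = single (i + 1) (d i x) := by
  simp [shiftSum]

@[simp]
theorem shiftSum_apply_add_one (x : Π₀ i, M i) (i : ℤ) : shiftSum d x (i + 1) = d i (x i) := by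
  induction x using DFinsupp.induction with
  | h0 => simp
  | ha j a x _ _ ih =>
    rcases eq_or_ne j i with rfl | hji
    · simp [ih]
    · simp [ih, hji]

theorem shiftSum_eq_zero_iff {x : Π₀ i, M i} : shiftSum d x = 0 ↔ ∀ i, d i (x i) = 0 := by
  refine ⟨fun h i ↦ by rw [← shiftSum_apply_add_one, h, zero_apply],
    fun h ↦ ext fun j ↦ ?_⟩
  obtain ⟨i, rfl⟩ : ∃ i, i + 1 = j := ⟨j - 1, by omega⟩
  simp [h i]

theorem surjective_shiftSum (hd : ∀ i, Function.Surjective (d i)) :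
    Function.Surjective (shiftSum d) := by
  rw [← LinearMap.range_eq_top, eq_top_iff]
  rintro y -
  induction y using DFinsupp.induction with
  | h0 => exact zero_mem _
  | ha j b y _ _ ih =>
    refine add_mem ?_ ih
    obtain ⟨i, rfl⟩ : ∃ i, i + 1 = j := ⟨j - 1, by omega⟩
    obtain ⟨a, rfl⟩ := hd i b
    exact ⟨single i a, shiftSum_single d i a⟩

theorem exact_mapRange_shiftSum {K : ℤ → Type*} [∀ i, AddCommGroup (K i)]
    [∀ i, Module R (K i)]
    {g : ∀ i, K i →ₗ[R] M i} (hgd : ∀ i, Function.Exact (g i) (d i)) :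
    Function.Exact (mapRange.linearMap g) (shiftSum d) := by
  classical
  intro x
  rw [shiftSum_eq_zero_iff]
  refine ⟨fun hx ↦ ?_, ?_⟩
  · choose k hk using fun i ↦ (hgd i (x i)).1 (hx i)
    refine ⟨mk x.support fun i ↦ k i, ext fun i ↦ ?_⟩
    by_cases hi : i ∈ x.support
    · simp [hi, hk]
    · simp_all
  · rintro ⟨k, rfl⟩ i
    simpa using (hgd i).apply_apply_eq_zero (k i)

end shift

end DFinsupp

section StronglyGorenstein

variable {R : Type} [Ring R]

theorem isStronglyGorensteinProjective_of_exact {N : ModuleCat.{0} R} {S : Type}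
    [AddCommGroup S] [Module R S] [Module.Projective R S] {ι : N →ₗ[R] S} {π : S →ₗ[R] N}
    (hι : Function.Injective ι) (hπ : Function.Surjective π) (hιπ : Function.Exact ι π)
    (hext : ∀ Q : ModuleCat.{0} R, Projective Q →
      ∀ φ : N →ₗ[R] Q, ∃ ψ : S →ₗ[R] Q, ψ ∘ₗ ι = φ) :
    IsStronglyGorensteinProjective R N := by
  have hιf : Function.Exact ι (ι ∘ₗ π) := hι.comp_exact_iff_exact.2 hιπ
  have hff : Function.Exact (ι ∘ₗ π) (ι ∘ₗ π) := hπ.comp_exact_iff_exact.2 hιf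
  refine ⟨ModuleCat.of R S, inferInstance, ModuleCat.ofHom (ι ∘ₗ π), hff,
    fun Q hQ φ ↦ ?_, ModuleCat.ofHom ι, hι, hιf⟩
  refine ⟨fun hφ ↦ ?_, ?_⟩
  · have hφι : φ.hom ∘ₗ ι = 0 := (LinearMap.cancel_right hπ).1 congr($(hφ).hom)
    obtain ⟨φ', hφ'⟩ := hιπ.exists_comp_eq_of_comp_eq_zero hπ hφι
    obtain ⟨ψ, hψ⟩ := hext Q hQ φ'
    refine ⟨ModuleCat.ofHom ψ, ModuleCat.hom_ext ?_⟩
    rw [← hφ', ← hψ]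
    rfl
  · rintro ⟨ψ, rfl⟩
    ext x
    simp [hιπ.apply_apply_eq_zero]

end StronglyGorenstein

/-- the direct sum of the kernels of an acyclic complex of projectives,
all of whose kernels are Gorenstein projective, is strongly Gorenstein projective. -/
theorem stmt4 (R : Type) [Ring R] (P : ℤ → ModuleCat.{0} R)
    (d : ∀ i : ℤ, P i ⟶ P (i + 1))
    (hP : ∀ i, Projective (P i))
    (hex : ∀ i, Function.Exact (d i) (d (i + 1)))
    (hker : ∀ i, IsGorensteinProjective R (ModuleCat.of R (LinearMap.ker (d i).hom))) :
    IsStronglyGorensteinProjective R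
      (ModuleCat.of R (Π₀ i : ℤ, ↥(LinearMap.ker (d i).hom))) := by
  let K (i : ℤ) := LinearMap.ker (d i).hom
  let p (i : ℤ) : P i →ₗ[R] K (i + 1) :=
    (d i).hom.codRestrict _ fun x ↦ (hex i).apply_apply_eq_zero x
  have hp (i : ℤ) : Function.Surjective (p i) := fun ⟨y, hy⟩ ↦ by
    obtain ⟨x, rfl⟩ := (hex i y).1 hy
    exact ⟨x, rfl⟩
  have hKp (i : ℤ) : Function.Exact (K i).subtype (p i) := fun x ↦
    Subtype.ext_iff.trans (LinearMap.exact_subtype_ker_map (d i).hom x)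
  exact isStronglyGorensteinProjective_of_exact (N := ModuleCat.of R (Π₀ i, K i))
    ((DFinsupp.mapRange_injective _ fun i ↦ map_zero (K i).subtype).2
      fun i ↦ (K i).injective_subtype)
    (DFinsupp.surjective_shiftSum (N := fun i ↦ K i) p hp)
    (DFinsupp.exact_mapRange_shiftSum (N := fun i ↦ K i) p hKp)
    fun Q hQ ↦ DFinsupp.exists_comp_mapRange_eq fun i ↦
      (hker (i + 1)).exists_comp_subtype_eq hQ (hp i) (hKp i)
end

section
/- Let R be a ring and N a strongly Gorenstein projective R-module. Then N^⊥ = N^{⊥∞}, i.e., a module X satisfies Ext^1_R(N,X) = 0 if and only if Ext^i_R(N,X) = 0 for all i ≥ 1. -/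
open CategoryTheory Opposite

/-!
A strongly Gorenstein projective module `N`, sitting in `0 → N →ι P → N → 0` with `ι` the
kernel of `f : P → P`, has the periodic projective resolution `⋯ →f P →f P →g N → 0`, where
`f = ι ∘ g`. Computing `Ext` with it, `Ext^{n+1}(N, X)` is the homology of
`Hom(P, X) →f^* Hom(P, X) →f^* Hom(P, X)` for every `n`, so all these groups vanish together.
-/

namespace ModuleCat

variable {R : Type} [Ring R] {N P : ModuleCat.{0} R}

lemma comp_eq_zero_of_exact {X Y Z : ModuleCat.{0} R} {u : X ⟶ Y} {v : Y ⟶ Z}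
    (h : Function.Exact u v) : u ≫ v = 0 :=
  hom_ext h.linearMap_comp_eq_zero

lemma exists_surjective_exact_of_exact_self {ι : N ⟶ P} {f : P ⟶ P}
    (hι : Function.Injective ι) (hιf : Function.Exact ι f) (hff : Function.Exact f f) :
    ∃ g : P ⟶ N, Function.Surjective g ∧ Function.Exact f g := by
  have : Mono ι := (mono_iff_injective ι).2 hι
  have hS : (ShortComplex.mk ι f (comp_eq_zero_of_exact hιf)).Exact :=
    (ShortComplex.ShortExact.moduleCat_exact_iff_function_exact _).2 hιf
  let g : P ⟶ N := hS.lift f (comp_eq_zero_of_exact hff)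
  have hgι : g ≫ ι = f := hS.lift_f _ _
  refine ⟨g, fun y => ?_, fun x => ?_⟩
  · obtain ⟨p, hp⟩ := (hff (ι y)).1 (hιf.apply_apply_eq_zero y)
    exact ⟨p, hι (by rw [← hp, ← hgι]; rfl)⟩
  · rw [← hff x, ← hgι, comp_apply, map_eq_zero_iff _ hι]

lemma extVanish_iff_exactAt {M : ModuleCat.{0} R} (res : ProjectiveResolution M) (n : ℕ)
    (X : ModuleCat.{0} R) :
    extVanish R n M X ↔ (res.complex.linearYonedaObj ℤ X).ExactAt n := by
  rw [HomologicalComplex.exactAt_iff_isZero_homology, isZero_iff_subsingleton]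
  exact ((forget (ModuleCat ℤ)).mapIso (res.isoExt n X)).toEquiv.subsingleton_congr

section Periodic

variable {f : P ⟶ P} {g : P ⟶ N}

variable (f) in
abbrev periodicComplex (hf : f ≫ f = 0) : ChainComplex (ModuleCat.{0} R) ℕ :=
  ChainComplex.of (fun _ => P) (fun _ => f) (fun _ => hf)

lemma periodicComplex_d (hf : f ≫ f = 0) (m : ℕ) : (periodicComplex f hf).d (m + 1) m = f :=
  ChainComplex.of_d (fun _ => P) (fun _ => f) m

noncomputable def periodicAugmentation (hf : f ≫ f = 0) (hfg : f ≫ g = 0) :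
    periodicComplex f hf ⟶ (ChainComplex.single₀ _).obj N :=
  (ChainComplex.toSingle₀Equiv _ N).symm ⟨g, by rw [periodicComplex_d]; exact hfg⟩

lemma quasiIso_periodicAugmentation (hff : Function.Exact f f) (hfg : Function.Exact f g)
    (hg : Function.Surjective g) :
    QuasiIso (periodicAugmentation (comp_eq_zero_of_exact hff) (comp_eq_zero_of_exact hfg)) := by
  set K := periodicComplex f (comp_eq_zero_of_exact hff)
  set π := periodicAugmentation (comp_eq_zero_of_exact hff) (comp_eq_zero_of_exact hfg)
  refine ⟨fun m => ?_⟩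
  cases m with
  | zero =>
    rw [ChainComplex.quasiIsoAt₀_iff, ShortComplex.quasiIso_iff_of_zeros']
    · have hπ : π.f 0 = g := ChainComplex.toSingle₀Equiv_symm_apply_f_zero _ _
      refine ⟨?_, (epi_iff_surjective _).2 (by rw [← hπ] at hg; exact hg)⟩
      rw [ShortComplex.moduleCat_exact_iff]
      intro x hx
      change π.f 0 x = 0 at hx
      rw [hπ] at hx
      obtain ⟨y, rfl⟩ := (hfg x).1 hx
      exact ⟨y, by change K.d 1 0 y = _; rw [periodicComplex_d]⟩
    all_goals rfl
  | succ m =>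
    rw [quasiIsoAt_iff_exactAt' _ _ (ChainComplex.exactAt_succ_single_obj _ _),
      HomologicalComplex.exactAt_iff' _ (m + 2) (m + 1) m (by simp) (by simp),
      ShortComplex.moduleCat_exact_iff]
    intro x hx
    change K.d (m + 1) m x = 0 at hx
    rw [periodicComplex_d] at hx
    obtain ⟨y, rfl⟩ := (hff x).1 hx
    exact ⟨y, by change K.d (m + 2) (m + 1) y = _; rw [periodicComplex_d]⟩

noncomputable def periodicProjectiveResolution [Projective P] (hff : Function.Exact f f)
    (hfg : Function.Exact f g) (hg : Function.Surjective g) : ProjectiveResolution N where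
  complex := periodicComplex f (comp_eq_zero_of_exact hff)
  π := periodicAugmentation (comp_eq_zero_of_exact hff) (comp_eq_zero_of_exact hfg)
  quasiIso := quasiIso_periodicAugmentation hff hfg hg

lemma extVanish_succ_iff [Projective P] (hff : Function.Exact f f)
    (hfg : Function.Exact f g) (hg : Function.Surjective g) (X : ModuleCat.{0} R) (n : ℕ) :
    extVanish R (n + 1) N X ↔ ∀ φ : P ⟶ X, f ≫ φ = 0 → ∃ ψ : P ⟶ X, f ≫ ψ = φ := by
  rw [extVanish_iff_exactAt (periodicProjectiveResolution hff hfg hg),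
    HomologicalComplex.exactAt_iff' _ n (n + 1) (n + 1 + 1) (by simp) (by simp),
    ShortComplex.moduleCat_exact_iff]
  simp only [periodicProjectiveResolution, HomologicalComplex.shortComplexFunctor'_obj_f,
    HomologicalComplex.shortComplexFunctor'_obj_g, ChainComplex.linearYonedaObj_d, ChainComplex.of_d]
  exact Iff.rfl

end Periodic

end ModuleCat

/-- for `N` strongly Gorenstein projective, `N^⊥ = N^{⊥∞}`. -/
theorem stmt5 (R : Type) [Ring R] (N : ModuleCat.{0} R)
    (hN : IsStronglyGorensteinProjective R N) :
    {X : ModuleCat.{0} R | extVanish R 1 N X} = perpInf R N := by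
  obtain ⟨P, hP, f, hff, -, ι, hι, hιf⟩ := hN
  obtain ⟨g, hg, hfg⟩ := ModuleCat.exists_surjective_exact_of_exact_self hι hιf hff
  ext X
  refine ⟨fun h1 i hi => ?_, fun h => h 1 le_rfl⟩
  obtain ⟨n, rfl⟩ := Nat.exists_eq_add_of_le' hi
  exact (ModuleCat.extVanish_succ_iff hff hfg hg X n).2
    ((ModuleCat.extVanish_succ_iff hff hfg hg X 0).1 h1)
end

section
/- Let R be a ring and N a strongly Gorenstein projective R-module which is not projective. Then the complete hereditary cotorsion pair (^⊥(N^⊥), N^⊥) has kernel equal to Add R (the class of projective modules), but N^⊥ is not a tilting class (since any module generating a tilting class has finite projective dimension, which would force N projective). -/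
open CategoryTheory Opposite

/-! A strongly Gorenstein projective `N` sits in a short exact sequence `0 → N → P → N → 0` with
`P` projective; splicing it with itself gives the periodic projective resolution
`⋯ → P → P → P → N`. Hence `Ext^i(N, -)` vanishes for one `i ≥ 1` iff it vanishes for all of
them, and it vanishes on projectives.

If `X ∈ ^⊥(N^⊥) ∩ N^⊥`, the long exact sequence and periodicity put the kernel `K` of a projective
cover `F → X` into `N^⊥`, so `Ext^1(X, K) = 0` splits the cover and `X` is projective.

If `N^⊥ = T^{⊥∞}` with `pd T ≤ m`, shifting dimensions along injective cosyzygies gives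
`Ext^{m+1}(N, -) = 0`, hence `Ext^1(N, N) = 0` by periodicity: then `0 → N → P → N → 0` splits and
`N` is projective. -/

open CategoryTheory.Limits

variable {R : Type} [Ring R]

namespace CategoryTheory.ProjectiveResolution

theorem extVanish_succ_iff {M Y : ModuleCat.{0} R} (P : ProjectiveResolution M) (n : ℕ) :
    extVanish R (n + 1) M Y ↔
      ∀ φ : P.complex.X (n + 1) ⟶ Y, P.complex.d (n + 2) (n + 1) ≫ φ = 0 →
        ∃ ψ : P.complex.X n ⟶ Y, P.complex.d (n + 1) n ≫ ψ = φ := by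
  rw [extVanish, extMod, ← ModuleCat.isZero_iff_subsingleton,
    (P.isoExt (R := ℤ) (n + 1) Y).isZero_iff, ← HomologicalComplex.exactAt_iff_isZero_homology,
    HomologicalComplex.exactAt_iff' _ n (n + 1) (n + 2) (by simp) (by simp),
    ShortComplex.moduleCat_exact_iff]
  rfl

end CategoryTheory.ProjectiveResolution

theorem extVanish_succ_of_injective (M : ModuleCat.{0} R) {I : ModuleCat.{0} R} [Injective I]
    (n : ℕ) : extVanish R (n + 1) M I :=
  let P := ProjectiveResolution.of M
  (P.extVanish_succ_iff n).2 fun φ hφ =>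
    ⟨(P.exact_succ n).descToInjective φ hφ, (P.exact_succ n).comp_descToInjective φ hφ⟩

namespace CategoryTheory.ShortComplex.ShortExact

/- The two pieces of the long exact sequence of `Ext^•(M, -)` along `S` that are needed below,
obtained by a diagram chase in a projective resolution of `M`. -/

variable {S : ShortComplex (ModuleCat.{0} R)} (hS : S.ShortExact) {M : ModuleCat.{0} R} {n : ℕ}
include hS

theorem extVanish_X₃ (h₁ : extVanish R (n + 2) M S.X₁) (h₂ : extVanish R (n + 1) M S.X₂) :
    extVanish R (n + 1) M S.X₃ := by
  let P := ProjectiveResolution.of M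
  rw [P.extVanish_succ_iff] at h₁ h₂ ⊢
  intro φ hφ
  have := hS.mono_f
  have := hS.epi_g
  let φ' := Projective.factorThru φ S.g
  have hφ' : (P.complex.d (n + 2) (n + 1) ≫ φ') ≫ S.g = 0 := by simp [φ', hφ]
  obtain ⟨β, hβ⟩ := h₁ (hS.exact.lift _ hφ') (by simp [← cancel_mono S.f])
  replace hβ : P.complex.d (n + 2) (n + 1) ≫ β = hS.exact.lift _ hφ' := hβ
  obtain ⟨γ, hγ⟩ := h₂ (φ' - β ≫ S.f) (by simp [Preadditive.comp_sub, reassoc_of% hβ])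
  exact ⟨γ ≫ S.g, by simp [reassoc_of% hγ, φ']⟩

theorem extVanish_X₁ (h₂ : extVanish R (n + 2) M S.X₂) (h₃ : extVanish R (n + 1) M S.X₃) :
    extVanish R (n + 2) M S.X₁ := by
  let P := ProjectiveResolution.of M
  rw [P.extVanish_succ_iff] at h₂ h₃ ⊢
  intro α hα
  have := hS.mono_f
  have := hS.epi_g
  obtain ⟨γ, hγ⟩ := h₂ (α ≫ S.f) (by simp [reassoc_of% hα])
  obtain ⟨δ, hδ⟩ := h₃ (γ ≫ S.g) (by simp [reassoc_of% hγ])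
  have hγ' : (γ - P.complex.d (n + 1) n ≫ Projective.factorThru δ S.g) ≫ S.g = 0 := by
    simp [hδ]
  refine ⟨hS.exact.lift _ hγ', ?_⟩
  simp [← cancel_mono S.f, Preadditive.comp_sub, hγ]

theorem exists_section_of_extVanish (h : extVanish R 1 S.X₃ S.X₁) :
    ∃ s : S.X₃ ⟶ S.X₂, s ≫ S.g = 𝟙 S.X₃ := by
  let P := ProjectiveResolution.of S.X₃
  rw [P.extVanish_succ_iff] at h
  have := hS.mono_f
  have := hS.epi_g
  let T : ShortComplex (ModuleCat.{0} R) :=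
    ShortComplex.mk (X₃ := S.X₃) (P.complex.d 1 0) (P.π.f 0) P.complex_d_comp_π_f_zero
  have hT : T.Exact := P.exact₀
  have : Epi T.g := inferInstanceAs (Epi (P.π.f 0))
  let u := Projective.factorThru T.g S.g
  have hu : (T.f ≫ u) ≫ S.g = 0 := by simp [u]
  obtain ⟨ψ, hψ⟩ := h (hS.exact.lift _ hu) (by simp [← cancel_mono S.f, T])
  have hu' : T.f ≫ (u - ψ ≫ S.f) = 0 := by
    simp [Preadditive.comp_sub, T, reassoc_of% hψ]
  refine ⟨hT.desc _ hu', ?_⟩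
  rw [← cancel_epi T.g, hT.g_desc_assoc, Preadditive.sub_comp, Category.assoc, S.zero,
    comp_zero, sub_zero, Projective.factorThru_comp]
  exact (Category.comp_id _).symm

end CategoryTheory.ShortComplex.ShortExact

theorem Function.Exact.moduleCat_comp_eq_zero {X Y Z : ModuleCat.{0} R} {f : X ⟶ Y} {g : Y ⟶ Z}
    (h : Function.Exact f g) : f ≫ g = 0 := by
  ext x
  exact h.apply_apply_eq_zero x

section PeriodicResolution

variable {N P : ModuleCat.{0} R} {f : P ⟶ P} {π : P ⟶ N}
  (hff : Function.Exact f f) (hfπ : Function.Exact f π) (hπ : Function.Surjective π)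

def periodicComplex : ChainComplex (ModuleCat.{0} R) ℕ :=
  ChainComplex.of (fun _ => P) (fun _ => f) (fun _ => hff.moduleCat_comp_eq_zero)

@[simp]
theorem periodicComplex_d (n : ℕ) : (periodicComplex hff).d (n + 1) n = f :=
  ChainComplex.of_d (fun _ => P) (fun _ => f) n

noncomputable def periodicResolution [Projective P] : ProjectiveResolution N where
  complex := periodicComplex hff
  projective _ := inferInstanceAs (Projective P)
  π := (ChainComplex.toSingle₀Equiv _ _).symm
    ⟨π, by rw [periodicComplex_d]; exact hfπ.moduleCat_comp_eq_zero⟩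
  quasiIso := ⟨fun n => by
    cases n with
    | zero =>
      rw [ChainComplex.quasiIsoAt₀_iff, ShortComplex.quasiIso_iff_of_zeros']
      · refine ⟨?_, (ModuleCat.epi_iff_surjective _).2 hπ⟩
        rw [ShortComplex.ShortExact.moduleCat_exact_iff_function_exact]
        exact hfπ
      all_goals rfl
    | succ n =>
      rw [quasiIsoAt_iff_exactAt' _ _ (ChainComplex.exactAt_succ_single_obj _ _),
        HomologicalComplex.exactAt_iff' _ (n + 2) (n + 1) n (by simp) (by simp),
        ShortComplex.ShortExact.moduleCat_exact_iff_function_exact]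
      simp only [HomologicalComplex.shortComplexFunctor'_obj_f,
        HomologicalComplex.shortComplexFunctor'_obj_g, periodicComplex_d]
      exact hff⟩

include hff hfπ hπ in
theorem extVanish_succ_iff_of_periodic [Projective P] {Y : ModuleCat.{0} R} (n : ℕ) :
    extVanish R (n + 1) N Y ↔ ∀ φ : P ⟶ Y, f ≫ φ = 0 → ∃ ψ : P ⟶ Y, f ≫ ψ = φ := by
  rw [(periodicResolution hff hfπ hπ).extVanish_succ_iff n]
  simp only [periodicResolution, periodicComplex_d]
  rfl

end PeriodicResolution

theorem addClass_self_eq :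
    AddClass R (ModuleCat.of R R) = {X | Projective X} := by
  ext X
  constructor
  · rintro ⟨κ, Y, ⟨e⟩⟩
    have : Module.Projective R (X × Y) := .of_equiv' e.toLinearEquiv.symm
    have : Module.Projective R X :=
      .of_split (LinearMap.inl R X Y) (LinearMap.fst R X Y) (LinearMap.fst_comp_inl R X Y)
    exact X.projective_of_categoryTheory_projective
  · intro (hX : Projective X)
    let c := Finsupp.linearCombination R (id : X → X)
    have hS := LinearMap.shortExact_shortComplexKer (f := c)
      fun x => ⟨Finsupp.single x 1, by simp [c]⟩
    have : Projective c.shortComplexKer.X₃ := hX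
    exact ⟨X, _, ⟨(ModuleCat.biprodIsoProd _ _).symm ≪≫ biprod.braiding _ _ ≪≫
      hS.splittingOfProjective.isoBinaryBiproduct.symm⟩⟩

theorem exists_surjective_exact_of_exact_self {N P : ModuleCat.{0} R} {f : P ⟶ P} {ι : N ⟶ P}
    (hff : Function.Exact f f) (hι : Function.Injective ι) (hιf : Function.Exact ι f) :
    ∃ π : P ⟶ N, Function.Surjective π ∧ Function.Exact f π ∧ Function.Exact ι π := by
  let S := ShortComplex.mk ι f hιf.moduleCat_comp_eq_zero
  have hS : S.Exact := (ShortComplex.ShortExact.moduleCat_exact_iff_function_exact S).2 hιf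
  have : Mono S.f := (ModuleCat.mono_iff_injective ι).2 hι
  let π := hS.lift f hff.moduleCat_comp_eq_zero
  have hπ (x : P) : ι (π x) = f x := congr($(hS.lift_f f hff.moduleCat_comp_eq_zero) x)
  have hπ_eq_zero (x : P) : π x = 0 ↔ f x = 0 := by
    rw [← hπ, map_eq_zero_iff _ hι]
  refine ⟨π, fun y => ?_, fun x => (hπ_eq_zero x).trans (hff x),
    fun x => (hπ_eq_zero x).trans (hιf x)⟩
  obtain ⟨x, hx⟩ := (hff (ι y)).1 (hιf.apply_apply_eq_zero y)
  exact ⟨x, hι (by rw [hπ, hx])⟩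

namespace IsStronglyGorensteinProjective

variable {N : ModuleCat.{0} R} (hN : IsStronglyGorensteinProjective R N)
include hN

theorem exists_extVanish_succ_iff : ∃ (P : ModuleCat.{0} R) (f : P ⟶ P),
    (∀ Q : ModuleCat.{0} R, Projective Q → ∀ φ : P ⟶ Q, f ≫ φ = 0 → ∃ ψ : P ⟶ Q, f ≫ ψ = φ) ∧
    ∀ (Y : ModuleCat.{0} R) (n : ℕ), extVanish R (n + 1) N Y ↔
      ∀ φ : P ⟶ Y, f ≫ φ = 0 → ∃ ψ : P ⟶ Y, f ≫ ψ = φ := by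
  obtain ⟨P, hP, f, hff, hhom, ι, hι, hιf⟩ := hN
  obtain ⟨π, hπ, hfπ, -⟩ := exists_surjective_exact_of_exact_self hff hι hιf
  exact ⟨P, f, fun Q hQ φ => (hhom Q hQ φ).1, fun Y n => extVanish_succ_iff_of_periodic hff hfπ hπ n⟩

theorem extVanish_iff {Y : ModuleCat.{0} R} {i j : ℕ} (hi : 1 ≤ i) (hj : 1 ≤ j) :
    extVanish R i N Y ↔ extVanish R j N Y := by
  obtain ⟨P, f, -, hext⟩ := hN.exists_extVanish_succ_iff
  obtain ⟨i, rfl⟩ := Nat.exists_eq_add_of_le' hi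
  obtain ⟨j, rfl⟩ := Nat.exists_eq_add_of_le' hj
  rw [hext, hext]

theorem extVanish_of_projective {Q : ModuleCat.{0} R} [hQ : Projective Q] (n : ℕ) :
    extVanish R (n + 1) N Q := by
  obtain ⟨P, f, hhom, hext⟩ := hN.exists_extVanish_succ_iff
  exact (hext Q n).2 (hhom Q hQ)

theorem projective_of_extVanish_self (h : extVanish R 1 N N) : Projective N := by
  obtain ⟨P, hP, f, hff, -, ι, hι, hιf⟩ := hN
  obtain ⟨π, hπ, -, hιπ⟩ := exists_surjective_exact_of_exact_self hff hι hιf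
  let S := ShortComplex.mk ι π hιπ.moduleCat_comp_eq_zero
  obtain ⟨s, hs⟩ := (ModuleCat.shortComplex_shortExact S hιπ hι hπ).exists_section_of_extVanish h
  exact Retract.projective ⟨s, π, hs⟩

theorem leftPerp_inter_eq :
    leftPerp R {X | extVanish R 1 N X} ∩ {X | extVanish R 1 N X} = {X | Projective X} := by
  ext X
  constructor
  · rintro ⟨hleft, hX⟩
    let S := ShortComplex.kernelSequence (Projective.π X)
    have hS : S.ShortExact := .mk' (ShortComplex.kernelSequence_exact _) inferInstance
      (inferInstanceAs (Epi (Projective.π X)))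
    have : Projective S.X₂ := inferInstanceAs (Projective (Projective.over X))
    have hK : extVanish R 1 N S.X₁ :=
      (hN.extVanish_iff (by norm_num) le_rfl).1 (hS.extVanish_X₁ (hN.extVanish_of_projective 1) hX)
    obtain ⟨s, hs⟩ := hS.exists_section_of_extVanish (hleft _ hK)
    exact Retract.projective ⟨s, S.g, hs⟩
  · intro (hX : Projective X)
    exact ⟨fun C _ => ModuleCat.isZero_iff_subsingleton.1 (isZero_Ext_succ_of_projective X C 0),
      hN.extVanish_of_projective 0⟩

end IsStronglyGorensteinProjective

theorem extVanish_succ_of_rightPerp_eq_perpInf {N T : ModuleCat.{0} R}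
    (hNT : {X | extVanish R 1 N X} = perpInf R T) (p : ℕ) (X : ModuleCat.{0} R)
    (hX : ∀ i, p < i → extVanish R i T X) : extVanish R (p + 1) N X := by
  induction p generalizing X with
  | zero =>
    have hX : X ∈ perpInf R T := hX
    rw [← hNT] at hX
    exact hX
  | succ p ih =>
    let S := ShortComplex.cokernelSequence (Injective.ι X)
    have hS : S.ShortExact := .mk' (ShortComplex.cokernelSequence_exact _)
      (inferInstanceAs (Mono (Injective.ι X))) inferInstance
    have : Injective S.X₂ := inferInstanceAs (Injective (Injective.under X))
    have hB : extVanish R (p + 1) N S.X₃ := ih S.X₃ fun i hi => by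
      obtain ⟨i, rfl⟩ := Nat.exists_eq_add_of_le' (Nat.one_le_of_lt hi)
      exact hS.extVanish_X₃ (hX (i + 2) (by omega)) (extVanish_succ_of_injective T i)
    exact hS.extVanish_X₁ (extVanish_succ_of_injective N (p + 1)) hB

theorem stmt13 (R : Type) [Ring R] (N : ModuleCat.{0} R)
    (hN : IsStronglyGorensteinProjective R N) (hnp : ¬ Projective N) :
    leftPerp R {X : ModuleCat.{0} R | extVanish R 1 N X} ∩
        {X : ModuleCat.{0} R | extVanish R 1 N X} =
      AddClass R (ModuleCat.of R R) ∧
    ¬ ∃ T : ModuleCat.{0} R, IsTilting R T ∧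
        {X : ModuleCat.{0} R | extVanish R 1 N X} = perpInf R T := by
  refine ⟨hN.leftPerp_inter_eq.trans addClass_self_eq.symm, ?_⟩
  rintro ⟨T, ⟨m, hpd, -⟩, hNT⟩
  have hN_succ (X : ModuleCat.{0} R) : extVanish R (m + 1) N X :=
    extVanish_succ_of_rightPerp_eq_perpInf hNT m X fun i hi => hpd X i hi
  exact hnp (hN.projective_of_extVanish_self ((hN.extVanish_iff (by omega) le_rfl).1 (hN_succ N)))
end
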